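/- arXiv:0911.3672 — 6 statements merged into one kernel-verified Lean document; each statement's English description precedes it below -/
import Mathlib

section
/- Let ω > 0 and ε > 0 with sin(ωε) ≠ 0. For any sequence (xₙ) of real numbers, the equation (x_{n+1} − 2xₙ + x_{n−1})/((2/ω)·sin(ωε/2))² + ω²·xₙ = 0 holds for all n if and only if the equation [ (x_{n+1} − xₙ·cos(ωε))·ω/sin(ωε) − (xₙ − x_{n−1}·cos(ωε))·(ω/sin(ωε))·cos(ωε) ]·ω/sin(ωε) + ω²·x_{n−1} = 0 holds for all n. -/
/-!
Both equations, multiplied by their (nonzero) scale factors, reduce to the three-term recurrence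
`x (n + 1) - 2 cos (ωε) x n + x (n - 1) = 0`: the first by `4 sin² (ωε/2) = 2 (1 - cos ωε)`,
the second by `sin² ωε + cos² ωε = 1`.
-/

open Real

lemma sin_half_ne_zero_of_sin_ne_zero {θ : ℝ} (h : sin θ ≠ 0) : sin (θ / 2) ≠ 0 := by
  intro h_half
  apply h
  rw [← mul_div_cancel₀ θ two_ne_zero, sin_two_mul, h_half]
  ring

lemma central_difference_eq_zero_iff {ω θ : ℝ} (hω : ω ≠ 0) (hθ : sin (θ / 2) ≠ 0)
    (a b c : ℝ) :
    (a - 2 * b + c) / ((2 / ω) * sin (θ / 2)) ^ 2 + ω ^ 2 * b = 0 ↔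
      a - 2 * cos θ * b + c = 0 := by
  have hcos : cos θ = 1 - 2 * sin (θ / 2) ^ 2 := by
    rw [← cos_two_mul_eq_one_sub, mul_div_cancel₀ θ two_ne_zero]
  have hscale : ((2 / ω) * sin (θ / 2)) ^ 2 ≠ 0 := by positivity
  have hlhs : (a - 2 * b + c) / ((2 / ω) * sin (θ / 2)) ^ 2 + ω ^ 2 * b =
      (a - 2 * cos θ * b + c) / ((2 / ω) * sin (θ / 2)) ^ 2 := by
    rw [hcos]
    field_simp
    ring
  rw [hlhs, div_eq_zero_iff, or_iff_left hscale]

lemma modified_difference_eq_zero_iff {ω θ : ℝ} (hω : ω ≠ 0) (hθ : sin θ ≠ 0) (a b c : ℝ) :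
    ((a - b * cos θ) * ω / sin θ - (b - c * cos θ) * (ω / sin θ) * cos θ) * ω / sin θ
        + ω ^ 2 * c = 0 ↔
      a - 2 * cos θ * b + c = 0 := by
  have hlhs : ((a - b * cos θ) * ω / sin θ - (b - c * cos θ) * (ω / sin θ) * cos θ) * ω / sin θ
      + ω ^ 2 * c = (ω / sin θ) ^ 2 * (a - 2 * cos θ * b + c) := by
    field_simp
    linear_combination c * sin_sq_add_cos_sq θ
  rw [hlhs, mul_eq_zero, or_iff_right (by positivity)]

theorem equiv_forms_exact_discretization_general
    (ω ε : ℝ) (hω : 0 < ω) (hs : Real.sin (ω * ε) ≠ 0)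
    (x : ℤ → ℝ) :
    (∀ n : ℤ,
      (x (n + 1) - 2 * x n + x (n - 1)) / ((2 / ω) * Real.sin (ω * ε / 2)) ^ 2
        + ω ^ 2 * x n = 0) ↔
    (∀ n : ℤ,
      ((x (n + 1) - x n * Real.cos (ω * ε)) * ω / Real.sin (ω * ε)
        - (x n - x (n - 1) * Real.cos (ω * ε)) * (ω / Real.sin (ω * ε))
            * Real.cos (ω * ε)) * ω / Real.sin (ω * ε)
        + ω ^ 2 * x (n - 1) = 0) :=
  forall_congr' fun _ =>
    (central_difference_eq_zero_iff hω.ne' (sin_half_ne_zero_of_sin_ne_zero hs) _ _ _).trans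
      (modified_difference_eq_zero_iff hω.ne' hs _ _ _).symm

/-- Equivalence of two forms of the exact discrete harmonic oscillator equation:
the form `(x_{n+1} - 2xₙ + x_{n-1})/((2/ω) sin(ωε/2))² + ω² xₙ = 0` and the form
`Δ_ε² x + ω² x = 0` with `Δ_ε = (T - cos ωε)/(ω⁻¹ sin ωε)`. -/
theorem equiv_forms_exact_discretization
    (ω ε : ℝ) (hω : 0 < ω) (hε : 0 < ε) (hs : Real.sin (ω * ε) ≠ 0)
    (x : ℤ → ℝ) :
    (∀ n : ℤ,
      (x (n + 1) - 2 * x n + x (n - 1)) / ((2 / ω) * Real.sin (ω * ε / 2)) ^ 2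
        + ω ^ 2 * x n = 0) ↔
    (∀ n : ℤ,
      ((x (n + 1) - x n * Real.cos (ω * ε)) * ω / Real.sin (ω * ε)
        - (x n - x (n - 1) * Real.cos (ω * ε)) * (ω / Real.sin (ω * ε))
            * Real.cos (ω * ε)) * ω / Real.sin (ω * ε)
        + ω ^ 2 * x (n - 1) = 0) :=
  equiv_forms_exact_discretization_general ω ε hω hs x
end

section
/- Let m > 0, k > 0, ω² = k/m, ε > 0, and suppose cos(ωε/2) ≠ 0 and sin(ωε) ≠ 0. Set δ = (2/ω)·tan(ωε/2). Then real sequences (xₙ), (pₙ) satisfy the implicit midpoint-type system m·(x_{n+1} − xₙ)/δ = (p_{n+1} + pₙ)/2 and (p_{n+1} − pₙ)/δ = −k·(x_{n+1} + xₙ)/2 for all n if and only if x_{n+1} − 2·cos(ωε)·xₙ + x_{n−1} = 0 and pₙ = m·ω·(x_{n+1} − xₙ·cos(ωε))/sin(ωε) for all n. In particular this system is the exact discretization of the Hamiltonian system m·ẋ = p, ṗ = −k·x. -/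
/-!
With θ = ωε/2, the midpoint step with `δ = (2/ω) tan θ` is the Cayley transform of the
oscillator's generator, which in the phase plane `(mωx, p)` is exactly the rotation by
`2θ = ωε`, i.e. the time-`ε` flow. Solved for the momenta, one step expresses both `pₙ` and
`p_{n+1}` through `xₙ, x_{n+1}`; the two expressions for `pₙ` coming from consecutive steps
agree precisely when the three-term recurrence holds.
-/

section Field

variable {K : Type*} [Field K] [CharZero K]

theorem midpoint_step_iff_cleared {m ω s c x₀ x₁ p₀ p₁ : K} (hω : ω ≠ 0) (hs : s ≠ 0) :
    (m * (x₁ - x₀) / (2 / ω * (s / c)) = (p₁ + p₀) / 2 ∧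
      (p₁ - p₀) / (2 / ω * (s / c)) = -(m * ω ^ 2 * (x₁ + x₀) / 2)) ↔
    (m * ω * c * (x₁ - x₀) = s * (p₁ + p₀) ∧ c * (p₁ - p₀) = -(m * ω * s * (x₁ + x₀))) := by
  apply and_congr <;> field_simp

theorem cayley_step_iff_rotation {a s c x₀ x₁ p₀ p₁ : K} (hsc : s ^ 2 + c ^ 2 = 1)
    (hs : s ≠ 0) (hc : c ≠ 0) :
    (a * c * (x₁ - x₀) = s * (p₁ + p₀) ∧ c * (p₁ - p₀) = -(a * s * (x₁ + x₀))) ↔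
    (p₀ = a * (x₁ - x₀ * (c ^ 2 - s ^ 2)) / (2 * s * c) ∧
      p₁ = a * (x₁ * (c ^ 2 - s ^ 2) - x₀) / (2 * s * c)) := by
  constructor
  · rintro ⟨hA, hB⟩
    constructor <;> rw [eq_div_iff (by simp [hs, hc])]
    · linear_combination (-c) * hA - s * hB + a * x₁ * hsc
    · linear_combination (-c) * hA + s * hB - a * x₀ * hsc
  · rintro ⟨rfl, rfl⟩
    constructor <;> field_simp
    · linear_combination a * (x₁ - x₀) * hsc
    · linear_combination a * (x₁ + x₀) * hsc

theorem forall_flow_step_iff_recurrence {a C S : K} (ha : a ≠ 0) (hS : S ≠ 0) (x p : ℤ → K) :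
    (∀ n, p n = a * (x (n + 1) - x n * C) / S ∧ p (n + 1) = a * (x (n + 1) * C - x n) / S) ↔
    ∀ n, x (n + 1) - 2 * C * x n + x (n - 1) = 0 ∧ p n = a * (x (n + 1) - x n * C) / S := by
  constructor
  · intro h n
    have hprev := (h (n - 1)).2
    rw [sub_add_cancel, (h n).1, div_left_inj' hS] at hprev
    have hrec := mul_left_cancel₀ ha hprev
    exact ⟨by linear_combination hrec, (h n).1⟩
  · intro h n
    have hnext := (h (n + 1)).1
    rw [add_sub_cancel_right] at hnext
    refine ⟨(h n).2, ?_⟩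
    rw [(h (n + 1)).2]
    linear_combination a / S * hnext

end Field

open Real in
theorem midpoint_step_iff_exact_step {m ω φ x₀ x₁ p₀ p₁ : ℝ} (hω : ω ≠ 0)
    (hc : cos (φ / 2) ≠ 0) (hs : sin φ ≠ 0) :
    (m * (x₁ - x₀) / (2 / ω * tan (φ / 2)) = (p₁ + p₀) / 2 ∧
      (p₁ - p₀) / (2 / ω * tan (φ / 2)) = -(m * ω ^ 2 * (x₁ + x₀) / 2)) ↔
    (p₀ = m * ω * (x₁ - x₀ * cos φ) / sin φ ∧ p₁ = m * ω * (x₁ * cos φ - x₀) / sin φ) := by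
  have hsin : sin φ = 2 * sin (φ / 2) * cos (φ / 2) := by
    rw [← sin_two_mul, mul_div_cancel₀ φ two_ne_zero]
  have hcos : cos φ = cos (φ / 2) ^ 2 - sin (φ / 2) ^ 2 := by
    rw [← cos_two_mul', mul_div_cancel₀ φ two_ne_zero]
  have hs' : sin (φ / 2) ≠ 0 := by
    intro h
    simp [hsin, h] at hs
  rw [tan_eq_sin_div_cos, midpoint_step_iff_cleared hω hs',
    cayley_step_iff_rotation (sin_sq_add_cos_sq _) hs' hc, hsin, hcos]

theorem midpoint_system_iff_exact_discretization_general
    (m k ε ω : ℝ) (hm : 0 < m)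
    (hω : ω ^ 2 = k / m)
    (hc : Real.cos (ω * ε / 2) ≠ 0) (hs : Real.sin (ω * ε) ≠ 0)
    (δ : ℝ) (hδ : δ = (2 / ω) * Real.tan (ω * ε / 2))
    (x p : ℤ → ℝ) :
    (∀ n : ℤ,
      m * (x (n + 1) - x n) / δ = (p (n + 1) + p n) / 2 ∧
      (p (n + 1) - p n) / δ = -(k * (x (n + 1) + x n) / 2)) ↔
    (∀ n : ℤ,
      x (n + 1) - 2 * Real.cos (ω * ε) * x n + x (n - 1) = 0 ∧
      p n = m * ω * (x (n + 1) - x n * Real.cos (ω * ε)) / Real.sin (ω * ε)) := by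
  have hω₀ : ω ≠ 0 := by
    rintro rfl
    simp at hs
  have hk : k = m * ω ^ 2 := by
    rw [hω, mul_div_cancel₀ k hm.ne']
  subst hδ hk
  rw [← forall_flow_step_iff_recurrence (mul_ne_zero hm.ne' hω₀) hs]
  exact forall_congr' fun n ↦ midpoint_step_iff_exact_step hω₀ hc hs

/-- The implicit midpoint-type system
`m(x_{n+1} - xₙ)/δ = (p_{n+1} + pₙ)/2`, `(p_{n+1} - pₙ)/δ = -k(x_{n+1} + xₙ)/2`
with `δ = (2/ω) tan(ωε/2)` is equivalent to the exact discretization of the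
Hamiltonian harmonic oscillator: `x_{n+1} - 2 cos(ωε) xₙ + x_{n-1} = 0` together with
`pₙ = mω (x_{n+1} - xₙ cos ωε)/sin ωε`. -/
theorem midpoint_system_iff_exact_discretization
    (m k ε ω : ℝ) (hm : 0 < m) (hk : 0 < k) (hε : 0 < ε)
    (hω : ω ^ 2 = k / m)
    (hc : Real.cos (ω * ε / 2) ≠ 0) (hs : Real.sin (ω * ε) ≠ 0)
    (δ : ℝ) (hδ : δ = (2 / ω) * Real.tan (ω * ε / 2))
    (x p : ℤ → ℝ) :
    (∀ n : ℤ,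
      m * (x (n + 1) - x n) / δ = (p (n + 1) + p n) / 2 ∧
      (p (n + 1) - p n) / δ = -(k * (x (n + 1) + x n) / 2)) ↔
    (∀ n : ℤ,
      x (n + 1) - 2 * Real.cos (ω * ε) * x n + x (n - 1) = 0 ∧
      p n = m * ω * (x (n + 1) - x n * Real.cos (ω * ε)) / Real.sin (ω * ε)) :=
  midpoint_system_iff_exact_discretization_general m k ε ω hm hω hc hs δ hδ x p
end

section
/- Let ω > 0, g ∈ ℝ, and let (tₙ) be an increasing sequence of times with steps εₙ = t_{n+1} − tₙ. If x : ℝ → ℝ satisfies x''(t) + ω²·x(t) = g for all t, then the sequence xₙ := x(tₙ) satisfies sin(ωεₙ₋₁)·x_{n+1} − sin(ω(εₙ + εₙ₋₁))·xₙ + sin(ωεₙ)·x_{n−1} = (g/ω²)·(sin(ωεₙ) + sin(ωεₙ₋₁) − sin(ω(εₙ + εₙ₋₁))) for all n. -/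
/-!
Subtracting the equilibrium `g/ω²` leaves a solution of `y'' + ω²y = 0`, which is
`a cos ωs + b sin ωs`: the quantities `y cos ωs - (y'/ω) sin ωs` and `y sin ωs + (y'/ω) cos ωs`
have zero derivative. Each of `cos ω·` and `sin ω·` satisfies the three-point relation
`sin(ωε') f(τ+ε) + sin(ωε) f(τ-ε') = sin(ω(ε+ε')) f(τ)` by the addition formulas, and the
constant `g/ω²` produces the right-hand side.
-/

open Real

theorem exists_eq_cos_sin_of_hasDerivAt {ω : ℝ} (hω : ω ≠ 0) {y y' y'' : ℝ → ℝ}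
    (hy : ∀ s, HasDerivAt y (y' s) s) (hy' : ∀ s, HasDerivAt y' (y'' s) s)
    (hode : ∀ s, y'' s + ω ^ 2 * y s = 0) :
    ∃ a b : ℝ, ∀ s, y s = a * cos (ω * s) + b * sin (ω * s) := by
  have hsin (s : ℝ) : HasDerivAt (fun s => sin (ω * s)) (cos (ω * s) * ω) s := by
    simpa using ((hasDerivAt_id s).const_mul ω).sin
  have hcos (s : ℝ) : HasDerivAt (fun s => cos (ω * s)) (-sin (ω * s) * ω) s := by
    simpa using ((hasDerivAt_id s).const_mul ω).cos
  set c : ℝ → ℝ := fun s => y s * cos (ω * s) - y' s / ω * sin (ω * s)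
  set d : ℝ → ℝ := fun s => y s * sin (ω * s) + y' s / ω * cos (ω * s)
  have hc (s : ℝ) : HasDerivAt c 0 s := by
    refine (((hy s).mul (hcos s)).sub (((hy' s).div_const ω).mul (hsin s))).congr_deriv ?_
    field_simp
    linear_combination (-sin (ω * s)) * hode s
  have hd (s : ℝ) : HasDerivAt d 0 s := by
    refine (((hy s).mul (hsin s)).add (((hy' s).div_const ω).mul (hcos s))).congr_deriv ?_
    field_simp
    linear_combination cos (ω * s) * hode s
  have hc_const (s : ℝ) : c s = c 0 :=
    is_const_of_deriv_eq_zero (fun u => (hc u).differentiableAt) (fun u => (hc u).deriv) s 0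
  have hd_const (s : ℝ) : d s = d 0 :=
    is_const_of_deriv_eq_zero (fun u => (hd u).differentiableAt) (fun u => (hd u).deriv) s 0
  refine ⟨c 0, d 0, fun s => ?_⟩
  rw [← hc_const s, ← hd_const s]
  linear_combination (-y s) * sin_sq_add_cos_sq (ω * s)

theorem sin_mul_add_sin_mul_eq_sin_add_mul_of_eq_cos_sin {ω a b : ℝ} {f : ℝ → ℝ}
    (hf : ∀ s, f s = a * cos (ω * s) + b * sin (ω * s)) (τ ε ε' : ℝ) :
    sin (ω * ε') * f (τ + ε) + sin (ω * ε) * f (τ - ε') = sin (ω * (ε + ε')) * f τ := by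
  simp only [hf, mul_add, mul_sub, sin_add, cos_add, sin_sub, cos_sub]
  ring

theorem exact_discretization_variable_step_driven_general
    (ω g : ℝ) (hω : 0 < ω)
    (t : ℤ → ℝ)
    (ε : ℤ → ℝ) (hε : ∀ n : ℤ, ε n = t (n + 1) - t n)
    (x : ℝ → ℝ) (hx : ContDiff ℝ 2 x)
    (hode : ∀ s : ℝ, deriv (deriv x) s + ω ^ 2 * x s = g) :
    ∀ n : ℤ,
      Real.sin (ω * ε (n - 1)) * x (t (n + 1))
        - Real.sin (ω * (ε n + ε (n - 1))) * x (t n)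
        + Real.sin (ω * ε n) * x (t (n - 1))
      = (g / ω ^ 2) * (Real.sin (ω * ε n) + Real.sin (ω * ε (n - 1))
          - Real.sin (ω * (ε n + ε (n - 1)))) := by
  intro n
  obtain ⟨a, b, hy⟩ := exists_eq_cos_sin_of_hasDerivAt hω.ne' (y := fun s => x s - g / ω ^ 2)
    (fun s => ((hx.differentiable two_ne_zero s).hasDerivAt).sub_const _)
    (fun s => (hx.differentiable_deriv_two s).hasDerivAt)
    (fun s => by field_simp; linear_combination hode s)
  have h_next : t (n + 1) = t n + ε n := by linarith [hε n]
  have h_prev : t (n - 1) = t n - ε (n - 1) := by linarith [sub_add_cancel n 1 ▸ hε (n - 1)]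
  have key := sin_mul_add_sin_mul_eq_sin_add_mul_of_eq_cos_sin hy (t n) (ε n) (ε (n - 1))
  rw [h_next, h_prev]
  linear_combination key

/-- Exact discretization, with variable time step `εₙ = t_{n+1} - tₙ`, of the driven
harmonic oscillator `x'' + ω²x = g`: the sampled solution `xₙ = x(tₙ)` satisfies
`sin(ωε_{n-1}) x_{n+1} - sin(ω(εₙ + ε_{n-1})) xₙ + sin(ωεₙ) x_{n-1}
  = (g/ω²)(sin ωεₙ + sin ωε_{n-1} - sin ω(εₙ + ε_{n-1}))`. -/
theorem exact_discretization_variable_step_driven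
    (ω g : ℝ) (hω : 0 < ω)
    (t : ℤ → ℝ) (ht : StrictMono t)
    (ε : ℤ → ℝ) (hε : ∀ n : ℤ, ε n = t (n + 1) - t n)
    (x : ℝ → ℝ) (hx : ContDiff ℝ 2 x)
    (hode : ∀ s : ℝ, deriv (deriv x) s + ω ^ 2 * x s = g) :
    ∀ n : ℤ,
      Real.sin (ω * ε (n - 1)) * x (t (n + 1))
        - Real.sin (ω * (ε n + ε (n - 1))) * x (t n)
        + Real.sin (ω * ε n) * x (t (n - 1))
      = (g / ω ^ 2) * (Real.sin (ω * ε n) + Real.sin (ω * ε (n - 1))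
          - Real.sin (ω * (ε n + ε (n - 1)))) :=
  exact_discretization_variable_step_driven_general ω g hω t ε hε x hx hode
end

section
/- Let ω > 0, g ∈ ℝ, ε > 0. If x : ℝ → ℝ satisfies x''(t) + ω²·x(t) = g for all t, then xₙ := x(nε) satisfies x_{n+1} − 2·cos(ωε)·xₙ + x_{n−1} = (4g/ω²)·sin²(ωε/2) for all n ∈ ℤ. -/
/-! Subtracting the equilibrium `g / ω²` reduces the equation to `y'' = -ω² y`. For such `y` and
fixed `t`, `u s = y (t + s) + y (t - s)` solves the same equation with `u' 0 = 0`, and the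
Wronskians of `u` against `cos (ω s)` and `sin (ω s)` are constant, which forces
`u s = u 0 * cos (ω s)`. With `s = ε` this is the homogeneous recurrence, and the constant term
comes from `1 - cos (ω ε) = 2 sin² (ω ε / 2)`. -/

open Real

section HarmonicOscillator

variable {ω : ℝ} {y y' : ℝ → ℝ}

theorem harmonic_mul_eq_cos_add_sin (hy : ∀ s, HasDerivAt y (y' s) s)
    (hy' : ∀ s, HasDerivAt y' (-(ω ^ 2) * y s) s) (s : ℝ) :
    ω * y s = ω * y 0 * cos (ω * s) + y' 0 * sin (ω * s) := by
  have hcos (s : ℝ) : HasDerivAt (fun s => cos (ω * s)) (-sin (ω * s) * ω) s := by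
    simpa using ((hasDerivAt_id s).const_mul ω).cos
  have hsin (s : ℝ) : HasDerivAt (fun s => sin (ω * s)) (cos (ω * s) * ω) s := by
    simpa using ((hasDerivAt_id s).const_mul ω).sin
  set W := fun s => ω * y s * cos (ω * s) - y' s * sin (ω * s)
  set V := fun s => ω * y s * sin (ω * s) + y' s * cos (ω * s)
  have hW (s : ℝ) : HasDerivAt W 0 s :=
    ((((hy s).const_mul ω).mul (hcos s)).sub ((hy' s).mul (hsin s))).congr_deriv (by ring)
  have hV (s : ℝ) : HasDerivAt V 0 s :=
    ((((hy s).const_mul ω).mul (hsin s)).add ((hy' s).mul (hcos s))).congr_deriv (by ring)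
  have hW_const : W s = W 0 :=
    is_const_of_deriv_eq_zero (fun s => (hW s).differentiableAt) (fun s => (hW s).deriv) s 0
  have hV_const : V s = V 0 :=
    is_const_of_deriv_eq_zero (fun s => (hV s).differentiableAt) (fun s => (hV s).deriv) s 0
  calc ω * y s = W s * cos (ω * s) + V s * sin (ω * s) := by
        linear_combination (ω * y s) * (sin_sq_add_cos_sq (ω * s)).symm
    _ = W 0 * cos (ω * s) + V 0 * sin (ω * s) := by rw [hW_const, hV_const]
    _ = ω * y 0 * cos (ω * s) + y' 0 * sin (ω * s) := by simp [W, V]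

theorem harmonic_add_add_sub_eq_two_cos_mul (hω : ω ≠ 0)
    (hy : ∀ s, HasDerivAt y (y' s) s) (hy' : ∀ s, HasDerivAt y' (-(ω ^ 2) * y s) s)
    (t s : ℝ) : y (t + s) + y (t - s) = 2 * cos (ω * s) * y t := by
  have hu (s : ℝ) : HasDerivAt (fun s => y (t + s) + y (t - s)) (y' (t + s) - y' (t - s)) s :=
    (((hy _).comp_const_add t s).add ((hy _).comp_const_sub t s)).congr_deriv (by ring)
  have hu' (s : ℝ) : HasDerivAt (fun s => y' (t + s) - y' (t - s))
      (-(ω ^ 2) * (y (t + s) + y (t - s))) s :=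
    (((hy' _).comp_const_add t s).sub ((hy' _).comp_const_sub t s)).congr_deriv (by ring)
  have h := harmonic_mul_eq_cos_add_sin hu hu' s
  simp only [add_zero, sub_zero, sub_self, zero_mul] at h
  exact mul_left_cancel₀ hω (by linear_combination h)

end HarmonicOscillator

theorem exact_discretization_constant_step_driven_general
    (ω g ε : ℝ) (hω : 0 < ω)
    (x : ℝ → ℝ) (hx : ContDiff ℝ 2 x)
    (hode : ∀ t : ℝ, deriv (deriv x) t + ω ^ 2 * x t = g) :
    ∀ n : ℤ,
      x (((n : ℝ) + 1) * ε) - 2 * Real.cos (ω * ε) * x ((n : ℝ) * ε)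
          + x (((n : ℝ) - 1) * ε)
        = (4 * g / ω ^ 2) * Real.sin (ω * ε / 2) ^ 2 := by
  intro n
  have hy (t : ℝ) : HasDerivAt (fun t => x t - g / ω ^ 2) (deriv x t) t :=
    ((hx.differentiable two_ne_zero t).hasDerivAt).sub_const _
  have hy' (t : ℝ) : HasDerivAt (deriv x) (-(ω ^ 2) * (x t - g / ω ^ 2)) t :=
    (hx.differentiable_deriv_two t).hasDerivAt.congr_deriv (by field_simp; linear_combination hode t)
  have h := harmonic_add_add_sub_eq_two_cos_mul hω.ne' hy hy' (n * ε) ε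
  rw [add_mul, sub_mul, one_mul, sin_sq_eq_half_sub, show 2 * (ω * ε / 2) = ω * ε by ring]
  linear_combination h

/-- Exact discretization with constant step `ε` of the driven harmonic oscillator
`x'' + ω²x = g`: the sampled solution `xₙ = x(nε)` satisfies
`x_{n+1} - 2 cos(ωε) xₙ + x_{n-1} = (4g/ω²) sin²(ωε/2)`. -/
theorem exact_discretization_constant_step_driven
    (ω g ε : ℝ) (hω : 0 < ω) (hε : 0 < ε)
    (x : ℝ → ℝ) (hx : ContDiff ℝ 2 x)
    (hode : ∀ t : ℝ, deriv (deriv x) t + ω ^ 2 * x t = g) :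
    ∀ n : ℤ,
      x (((n : ℝ) + 1) * ε) - 2 * Real.cos (ω * ε) * x ((n : ℝ) * ε)
          + x (((n : ℝ) - 1) * ε)
        = (4 * g / ω ^ 2) * Real.sin (ω * ε / 2) ^ 2 :=
  exact_discretization_constant_step_driven_general ω g ε hω x hx hode
end

section
/- Let Ω be a symmetric real N×N matrix, ε > 0, and suppose the matrix S := Ω⁻¹sin(Ωε) (given by the entire series ∑_{k≥0} (−1)^k ε^{2k+1}/(2k+1)!·(Ω²)^k) is invertible. Let (xₙ) be a sequence in ℝᴺ satisfying x_{n+1} − 2·cos(Ωε)·xₙ + x_{n−1} = 0 (with cos(Ωε) = ∑_{k≥0} (−1)^k ε^{2k}/(2k)!·(Ω²)^k), and define vₙ := S⁻¹·(x_{n+1} − cos(Ωε)·xₙ). Then the quantity Iₙ := ½·|vₙ|² + ½·⟨xₙ, Ω²·xₙ⟩ satisfies I_{n+1} = Iₙ for all n, where ⟨·,·⟩ is the Euclidean inner product on ℝᴺ and |v|² = ⟨v, v⟩. -/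
open Matrix

/-- The entire matrix power series `cos(Ωε)` in `Ω²`. -/
noncomputable def matCos {N : ℕ} (M : Matrix (Fin N) (Fin N) ℝ) (ε : ℝ) :
    Matrix (Fin N) (Fin N) ℝ :=
  ∑' k : ℕ, (((-1 : ℝ) ^ k * ε ^ (2 * k)) / (Nat.factorial (2 * k) : ℝ)) • M ^ k

/-- The entire matrix power series `Ω⁻¹ sin(Ωε)` in `Ω²`. -/
noncomputable def matSin {N : ℕ} (M : Matrix (Fin N) (Fin N) ℝ) (ε : ℝ) :
    Matrix (Fin N) (Fin N) ℝ :=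
  ∑' k : ℕ, (((-1 : ℝ) ^ k * ε ^ (2 * k + 1)) / (Nat.factorial (2 * k + 1) : ℝ)) • M ^ k

/-!
Let `G = [[0, 1], [-M, 0]]` be the generator of the first-order system `x' = v`, `v' = -M x`.
The even and odd parts of the exponential series show that the upper blocks of `exp (t • G)` are
`C = cos` and `S = Ω⁻¹ sin` (with `M = Ω²`), and since `G` commutes with `exp (t • G)` the lower
blocks are `-M S` and `C`. Comparing blocks in `exp (t • G) * exp (-t • G) = 1` gives
`C² + M S² = 1` and `C S = S C`.

With `y = xₙ`, `z = xₙ₊₁`, the recurrence gives `vₙ = S⁻¹ (z - C y)` and `vₙ₊₁ = S⁻¹ (C z - y)`.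
Since `S⁻¹` is symmetric, `|S⁻¹ u|² = u ⬝ Q u` with `Q = S⁻²`, and `C Q C = Q - M` because `C`
commutes with `Q`; expanding both energies, the quadratic terms then agree and the cross terms are
`z ⬝ C Q y + y ⬝ C Q z` on both sides.
-/

open NormedSpace
open scoped Nat

theorem tsum_two_mul_of_odd_eq_zero {α : Type*} [AddCommMonoid α] [TopologicalSpace α]
    {f : ℕ → α} (h : ∀ k, f (2 * k + 1) = 0) : ∑' k, f (2 * k) = ∑' n, f n := by
  refine (mul_right_injective₀ two_ne_zero).tsum_eq fun n hn => ?_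
  obtain ⟨k, rfl | rfl⟩ := Nat.even_or_odd' n
  · exact ⟨k, rfl⟩
  · exact absurd (h k) hn

theorem tsum_two_mul_add_one_of_even_eq_zero {α : Type*} [AddCommMonoid α] [TopologicalSpace α]
    {f : ℕ → α} (h : ∀ k, f (2 * k) = 0) : ∑' k, f (2 * k + 1) = ∑' n, f n := by
  have hinj : (fun k : ℕ => 2 * k + 1).Injective := fun a b hab => by simpa using hab
  refine hinj.tsum_eq fun n hn => ?_
  obtain ⟨k, rfl | rfl⟩ := Nat.even_or_odd' n
  · exact absurd (h k) hn
  · exact ⟨k, rfl⟩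

section Blocks
variable {ι l m o p R : Type*} [AddCommMonoid R] [TopologicalSpace R]
  {f : ι → Matrix (l ⊕ m) (o ⊕ p) R} {A : Matrix (l ⊕ m) (o ⊕ p) R}

theorem HasSum.matrix_toBlocks₁₁ (hf : HasSum f A) :
    HasSum (fun i => (f i).toBlocks₁₁) A.toBlocks₁₁ :=
  Pi.hasSum.2 fun _ => Pi.hasSum.2 fun _ => Pi.hasSum.1 (Pi.hasSum.1 hf _) _

theorem HasSum.matrix_toBlocks₁₂ (hf : HasSum f A) :
    HasSum (fun i => (f i).toBlocks₁₂) A.toBlocks₁₂ :=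
  Pi.hasSum.2 fun _ => Pi.hasSum.2 fun _ => Pi.hasSum.1 (Pi.hasSum.1 hf _) _

end Blocks

section Energy
variable {n R : Type*} [Fintype n] [CommRing R]

theorem Matrix.IsSymm.mulVec_dotProduct {P : Matrix n n R} (hP : P.IsSymm) (u w : n → R) :
    P *ᵥ u ⬝ᵥ w = u ⬝ᵥ P *ᵥ w := by
  rw [dotProduct_mulVec, ← vecMul_transpose, hP.eq]

theorem discrete_energy_step_of_sandwich {C Q M : Matrix n n R} (hC : C.IsSymm)
    (hCQ : Commute C Q) (hCQC : C * Q * C = Q - M) (y z : n → R) :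
    (C *ᵥ z - y) ⬝ᵥ Q *ᵥ (C *ᵥ z - y) + z ⬝ᵥ M *ᵥ z
      = (z - C *ᵥ y) ⬝ᵥ Q *ᵥ (z - C *ᵥ y) + y ⬝ᵥ M *ᵥ y := by
  have hleft (u w : n → R) : C *ᵥ u ⬝ᵥ Q *ᵥ w = u ⬝ᵥ (C * Q) *ᵥ w := by
    rw [hC.mulVec_dotProduct, mulVec_mulVec]
  have hright (u w : n → R) : u ⬝ᵥ Q *ᵥ C *ᵥ w = u ⬝ᵥ (C * Q) *ᵥ w := by
    rw [mulVec_mulVec, hCQ.eq]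
  have hsandwich (u : n → R) : C *ᵥ u ⬝ᵥ Q *ᵥ C *ᵥ u = u ⬝ᵥ Q *ᵥ u - u ⬝ᵥ M *ᵥ u := by
    rw [hleft, mulVec_mulVec, hCQC, sub_mulVec, dotProduct_sub]
  simp only [mulVec_sub, dotProduct_sub, sub_dotProduct, hsandwich]
  simp only [hleft, hright]
  ring

variable [DecidableEq n]

theorem discrete_energy_step {C S M : Matrix n n R} (hC : C.IsSymm) (hS : S.IsSymm)
    (hCS : Commute C S) (hpyth : C ^ 2 + M * S ^ 2 = 1) (hSu : IsUnit S) (y z : n → R) :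
    S⁻¹ *ᵥ (C *ᵥ z - y) ⬝ᵥ S⁻¹ *ᵥ (C *ᵥ z - y) + z ⬝ᵥ M *ᵥ z
      = S⁻¹ *ᵥ (z - C *ᵥ y) ⬝ᵥ S⁻¹ *ᵥ (z - C *ᵥ y) + y ⬝ᵥ M *ᵥ y := by
  have hinv : S⁻¹.IsSymm := by rw [IsSymm, transpose_nonsing_inv, hS.eq]
  have hCinv : Commute C S⁻¹ := by
    obtain ⟨u, rfl⟩ := hSu
    rw [← coe_units_inv]
    exact hCS.units_inv_right
  have hdet : IsUnit S.det := (isUnit_iff_isUnit_det S).1 hSu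
  have hnorm (u : n → R) : S⁻¹ *ᵥ u ⬝ᵥ S⁻¹ *ᵥ u = u ⬝ᵥ (S⁻¹ ^ 2) *ᵥ u := by
    rw [hinv.mulVec_dotProduct, mulVec_mulVec, sq]
  simp only [hnorm]
  refine discrete_energy_step_of_sandwich hC (hCinv.pow_right 2) ?_ y z
  calc C * S⁻¹ ^ 2 * C = (1 - M * S ^ 2) * S⁻¹ ^ 2 := by
        rw [mul_assoc, ← (hCinv.pow_right 2).eq, ← mul_assoc, ← sq, ← hpyth, add_sub_cancel_right]
    _ = S⁻¹ ^ 2 - M := by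
        rw [sub_mul, one_mul, mul_assoc, sq, sq, mul_assoc S, mul_nonsing_inv_cancel_left _ _ hdet,
          mul_nonsing_inv _ hdet, mul_one]

end Energy

section Generator

variable {n : Type*} [Fintype n] [DecidableEq n]

theorem summable_expSeries_matrix {𝕂 : Type*} [RCLike 𝕂] (A : Matrix n n 𝕂) :
    Summable fun k : ℕ => ((k !)⁻¹ : 𝕂) • A ^ k := by
  open scoped Norms.Operator in exact expSeries_summable' A

def oscillatorGenerator (M : Matrix n n ℝ) : Matrix (n ⊕ n) (n ⊕ n) ℝ :=
  fromBlocks 0 1 (-M) 0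

theorem oscillatorGenerator_pow_two_mul (M : Matrix n n ℝ) (k : ℕ) :
    oscillatorGenerator M ^ (2 * k) = fromBlocks ((-M) ^ k) 0 0 ((-M) ^ k) := by
  rw [pow_mul, ← fromBlocks_diagonal_pow]
  simp [oscillatorGenerator, sq, fromBlocks_multiply]

theorem oscillatorGenerator_pow_two_mul_add_one (M : Matrix n n ℝ) (k : ℕ) :
    oscillatorGenerator M ^ (2 * k + 1) = fromBlocks 0 ((-M) ^ k) ((-M) ^ (k + 1)) 0 := by
  rw [pow_succ, oscillatorGenerator_pow_two_mul]
  simp [oscillatorGenerator, fromBlocks_multiply, pow_succ]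

end Generator

section MatCosSin

variable {N : ℕ}

theorem toBlocks₁₁_exp_smul_oscillatorGenerator (M : Matrix (Fin N) (Fin N) ℝ) (t : ℝ) :
    (exp (t • oscillatorGenerator M)).toBlocks₁₁ = matCos M t := by
  rw [congrFun (exp_eq_tsum ℝ) _,
    ← (summable_expSeries_matrix _).hasSum.matrix_toBlocks₁₁.tsum_eq,
    ← tsum_two_mul_of_odd_eq_zero, matCos]
  · refine tsum_congr fun k => ?_
    rw [smul_pow, oscillatorGenerator_pow_two_mul, fromBlocks_smul, fromBlocks_smul,
      toBlocks_fromBlocks₁₁, smul_smul, ← neg_one_smul ℝ M, smul_pow, smul_smul]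
    congr 1
    ring
  · intro k
    simp [smul_pow, oscillatorGenerator_pow_two_mul_add_one, fromBlocks_smul]

theorem toBlocks₁₂_exp_smul_oscillatorGenerator (M : Matrix (Fin N) (Fin N) ℝ) (t : ℝ) :
    (exp (t • oscillatorGenerator M)).toBlocks₁₂ = matSin M t := by
  rw [congrFun (exp_eq_tsum ℝ) _,
    ← (summable_expSeries_matrix _).hasSum.matrix_toBlocks₁₂.tsum_eq,
    ← tsum_two_mul_add_one_of_even_eq_zero, matSin]
  · refine tsum_congr fun k => ?_
    rw [smul_pow, oscillatorGenerator_pow_two_mul_add_one, fromBlocks_smul, fromBlocks_smul,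
      toBlocks_fromBlocks₁₂, smul_smul, ← neg_one_smul ℝ M, smul_pow, smul_smul]
    congr 1
    ring
  · intro k
    simp [smul_pow, oscillatorGenerator_pow_two_mul, fromBlocks_smul]

theorem exp_smul_oscillatorGenerator (M : Matrix (Fin N) (Fin N) ℝ) (t : ℝ) :
    exp (t • oscillatorGenerator M) =
      fromBlocks (matCos M t) (matSin M t) (-(M * matSin M t)) (matCos M t) := by
  have hcomm : Commute (oscillatorGenerator M) (exp (t • oscillatorGenerator M)) :=
    ((Commute.refl _).smul_right t).exp_right
  rw [← fromBlocks_toBlocks (exp _), toBlocks₁₁_exp_smul_oscillatorGenerator,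
    toBlocks₁₂_exp_smul_oscillatorGenerator] at hcomm ⊢
  set E := exp (t • oscillatorGenerator M)
  simp only [Commute, SemiconjBy, oscillatorGenerator, fromBlocks_multiply] at hcomm
  obtain ⟨-, h₁₂, -, h₂₂⟩ := fromBlocks_inj.1 hcomm
  simp only [zero_mul, one_mul, zero_add, mul_zero, mul_one, add_zero, neg_mul] at h₁₂ h₂₂
  rw [h₁₂, h₂₂]

theorem matCos_neg (M : Matrix (Fin N) (Fin N) ℝ) (t : ℝ) : matCos M (-t) = matCos M t := by
  simp [matCos, pow_mul]

theorem matSin_neg (M : Matrix (Fin N) (Fin N) ℝ) (t : ℝ) : matSin M (-t) = -matSin M t := by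
  simp [matSin, pow_succ, pow_mul, ← tsum_neg, neg_div]

theorem fromBlocks_matCos_matSin_mul_neg (M : Matrix (Fin N) (Fin N) ℝ) (t : ℝ) :
    fromBlocks (matCos M t) (matSin M t) (-(M * matSin M t)) (matCos M t) *
      fromBlocks (matCos M t) (-matSin M t) (M * matSin M t) (matCos M t) = 1 := by
  have h := Matrix.exp_add_of_commute _ _
    (((Commute.refl (oscillatorGenerator M)).smul_left t).smul_right (-t))
  rw [← add_smul, add_neg_cancel, zero_smul, exp_zero, exp_smul_oscillatorGenerator,
    exp_smul_oscillatorGenerator, matCos_neg, matSin_neg, mul_neg, neg_neg] at h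
  exact h.symm

theorem matCos_sq_add_mul_matSin_sq (M : Matrix (Fin N) (Fin N) ℝ) (t : ℝ) :
    matCos M t ^ 2 + M * matSin M t ^ 2 = 1 := by
  have h := fromBlocks_matCos_matSin_mul_neg M t
  rw [fromBlocks_multiply, ← fromBlocks_one] at h
  obtain ⟨-, -, -, h₂₂⟩ := fromBlocks_inj.1 h
  rw [← h₂₂]
  noncomm_ring

theorem commute_matCos_matSin (M : Matrix (Fin N) (Fin N) ℝ) (t : ℝ) :
    Commute (matCos M t) (matSin M t) := by
  have h := fromBlocks_matCos_matSin_mul_neg M t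
  rw [fromBlocks_multiply, ← fromBlocks_one] at h
  obtain ⟨-, h₁₂, -, -⟩ := fromBlocks_inj.1 h
  rw [mul_neg, neg_add_eq_zero] at h₁₂
  exact h₁₂

theorem isSymm_matCos {M : Matrix (Fin N) (Fin N) ℝ} (hM : M.IsSymm) (t : ℝ) :
    (matCos M t).IsSymm := by
  rw [IsSymm, matCos, transpose_tsum]
  exact tsum_congr fun k => ((hM.pow k).smul _).eq

theorem isSymm_matSin {M : Matrix (Fin N) (Fin N) ℝ} (hM : M.IsSymm) (t : ℝ) :
    (matSin M t).IsSymm := by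
  rw [IsSymm, matSin, transpose_tsum]
  exact tsum_congr fun k => ((hM.pow k).smul _).eq

end MatCosSin

theorem discrete_energy_multidimensional_oscillator_general
    {N : ℕ} (Ω : Matrix (Fin N) (Fin N) ℝ) (hΩ : Ωᵀ = Ω)
    (ε : ℝ)
    (hS : IsUnit (matSin (Ω ^ 2) ε))
    (x v : ℤ → (Fin N → ℝ))
    (hrec : ∀ n : ℤ,
      x (n + 1) - (2 : ℝ) • (matCos (Ω ^ 2) ε).mulVec (x n) + x (n - 1) = 0)
    (hv : ∀ n : ℤ,
      v n = (matSin (Ω ^ 2) ε)⁻¹.mulVec (x (n + 1) - (matCos (Ω ^ 2) ε).mulVec (x n))) :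
    ∀ n : ℤ,
      (1 / 2 : ℝ) * (v (n + 1) ⬝ᵥ v (n + 1))
          + (1 / 2 : ℝ) * (x (n + 1) ⬝ᵥ (Ω ^ 2).mulVec (x (n + 1)))
        = (1 / 2 : ℝ) * (v n ⬝ᵥ v n)
          + (1 / 2 : ℝ) * (x n ⬝ᵥ (Ω ^ 2).mulVec (x n)) := by
  intro n
  have hM : (Ω ^ 2).IsSymm := IsSymm.pow hΩ 2
  have hnext : x (n + 1 + 1) - matCos (Ω ^ 2) ε *ᵥ x (n + 1)
      = matCos (Ω ^ 2) ε *ᵥ x (n + 1) - x n := by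
    have h := hrec (n + 1)
    rw [add_sub_cancel_right, two_smul] at h
    linear_combination h
  rw [hv, hv, hnext]
  linear_combination (1 / 2 : ℝ) * discrete_energy_step (isSymm_matCos hM ε)
    (isSymm_matSin hM ε) (commute_matCos_matSin _ ε) (matCos_sq_add_mul_matSin_sq _ ε) hS
    (x n) (x (n + 1))

/-- Energy conservation for the exact discretization of the multidimensional harmonic
oscillator: if `Ω` is symmetric, `S = Ω⁻¹ sin(Ωε)` invertible,
`x_{n+1} - 2 cos(Ωε) xₙ + x_{n-1} = 0` and `vₙ = S⁻¹(x_{n+1} - cos(Ωε) xₙ)`, then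
`Iₙ = ½|vₙ|² + ½⟨xₙ, Ω²xₙ⟩` satisfies `I_{n+1} = Iₙ`. -/
theorem discrete_energy_multidimensional_oscillator
    {N : ℕ} (Ω : Matrix (Fin N) (Fin N) ℝ) (hΩ : Ωᵀ = Ω)
    (ε : ℝ) (hε : 0 < ε)
    (hS : IsUnit (matSin (Ω ^ 2) ε))
    (x v : ℤ → (Fin N → ℝ))
    (hrec : ∀ n : ℤ,
      x (n + 1) - (2 : ℝ) • (matCos (Ω ^ 2) ε).mulVec (x n) + x (n - 1) = 0)
    (hv : ∀ n : ℤ,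
      v n = (matSin (Ω ^ 2) ε)⁻¹.mulVec (x (n + 1) - (matCos (Ω ^ 2) ε).mulVec (x n))) :
    ∀ n : ℤ,
      (1 / 2 : ℝ) * (v (n + 1) ⬝ᵥ v (n + 1))
          + (1 / 2 : ℝ) * (x (n + 1) ⬝ᵥ (Ω ^ 2).mulVec (x (n + 1)))
        = (1 / 2 : ℝ) * (v n ⬝ᵥ v n)
          + (1 / 2 : ℝ) * (x n ⬝ᵥ (Ω ^ 2).mulVec (x n)) :=
  discrete_energy_multidimensional_oscillator_general Ω hΩ ε hS x v hrec hv
end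

section
/- Let Ω be a symmetric invertible real N×N matrix, a ∈ ℝᴺ, and let δₙ be a symmetric invertible real N×N matrix commuting with Ω² (e.g. δₙ = 2Ω⁻¹tan(Ωεₙ/2)). Suppose the pairs (xₙ, vₙ), (x_{n+1}, v_{n+1}) in ℝᴺ × ℝᴺ satisfy δₙ⁻¹·(x_{n+1} − xₙ) = ½·(v_{n+1} + vₙ) and δₙ⁻¹·(v_{n+1} − vₙ) = −½·Ω²·(x_{n+1} + xₙ) + a. Then Iₙ := ½·|vₙ|² + ½·⟨xₙ, Ω²·xₙ⟩ − ⟨a, xₙ⟩ satisfies I_{n+1} = Iₙ, where ⟨·,·⟩ is the Euclidean inner product on ℝᴺ and |v|² = ⟨v, v⟩. -/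
/-!
The scheme is a discrete-gradient method. By symmetry of `M = Ω²`, the energy difference is
`⟨Δv, v̄⟩ + ⟨Δx, g⟩` with the midpoint velocity `v̄ = ½(v₁ + v₀)` and the discrete gradient
`g = ½M(x₁ + x₀) - a`. The scheme says `Δx = δ v̄` and `Δv = -δ g`, so the difference is
`⟨δ v̄, g⟩ - ⟨δ g, v̄⟩`, which vanishes because `δ` is symmetric.
-/

open Matrix

namespace Matrix

variable {n R : Type*} [Fintype n] [CommRing R]

theorem IsSymm.dotProduct_mulVec_comm {A : Matrix n n R} (hA : A.IsSymm) (x y : n → R) :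
    x ⬝ᵥ A *ᵥ y = y ⬝ᵥ A *ᵥ x := by
  simpa only [hA.eq] using dotProduct_transpose_mulVec A x y

theorem IsSymm.dotProduct_mulVec_self_sub {A : Matrix n n R} (hA : A.IsSymm) (x y : n → R) :
    x ⬝ᵥ A *ᵥ x - y ⬝ᵥ A *ᵥ y = (x - y) ⬝ᵥ A *ᵥ (x + y) := by
  have := hA.dotProduct_mulVec_comm x y
  simp only [sub_dotProduct, mulVec_add, dotProduct_add]
  linear_combination -this

theorem dotProduct_self_sub_dotProduct_self (x y : n → R) :
    x ⬝ᵥ x - y ⬝ᵥ y = (x - y) ⬝ᵥ (x + y) := by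
  rw [sub_dotProduct, dotProduct_add, dotProduct_add, dotProduct_comm y x]
  ring

theorem eq_mulVec_of_inv_mulVec_eq [DecidableEq n] {A : Matrix n n R} (hA : IsUnit A.det)
    {u w : n → R} (h : A⁻¹ *ᵥ u = w) : u = A *ᵥ w := by
  rw [← h, mulVec_mulVec, mul_nonsing_inv A hA, one_mulVec]

end Matrix

section DrivenOscillator

variable {n K : Type*} [Fintype n] [Field K]

def oscillatorEnergy (M : Matrix n n K) (a x v : n → K) : K :=
  1 / 2 * (v ⬝ᵥ v) + 1 / 2 * (x ⬝ᵥ M *ᵥ x) - a ⬝ᵥ x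

theorem oscillatorEnergy_sub_oscillatorEnergy {M : Matrix n n K} (hM : M.IsSymm)
    (a x₀ v₀ x₁ v₁ : n → K) :
    oscillatorEnergy M a x₁ v₁ - oscillatorEnergy M a x₀ v₀ =
      (v₁ - v₀) ⬝ᵥ ((1 / 2 : K) • (v₁ + v₀)) +
        (x₁ - x₀) ⬝ᵥ ((1 / 2 : K) • M *ᵥ (x₁ + x₀) - a) := by
  have hv := dotProduct_self_sub_dotProduct_self v₁ v₀
  have hx := hM.dotProduct_mulVec_self_sub x₁ x₀
  rw [oscillatorEnergy, oscillatorEnergy, dotProduct_sub, dotProduct_smul, dotProduct_smul,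
    smul_eq_mul, smul_eq_mul, ← hv, ← hx, sub_dotProduct, dotProduct_comm x₁ a,
    dotProduct_comm x₀ a]
  ring

theorem oscillatorEnergy_eq_of_step {M δ : Matrix n n K} (hM : M.IsSymm) (hδ : δ.IsSymm)
    {a x₀ v₀ x₁ v₁ : n → K}
    (hx : x₁ - x₀ = δ *ᵥ ((1 / 2 : K) • (v₁ + v₀)))
    (hv : v₁ - v₀ = δ *ᵥ (-((1 / 2 : K) • M *ᵥ (x₁ + x₀)) + a)) :
    oscillatorEnergy M a x₁ v₁ = oscillatorEnergy M a x₀ v₀ := by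
  have hv' : v₁ - v₀ = -(δ *ᵥ ((1 / 2 : K) • M *ᵥ (x₁ + x₀) - a)) := by
    rw [hv, ← mulVec_neg, neg_sub, neg_add_eq_sub]
  rw [← sub_eq_zero, oscillatorEnergy_sub_oscillatorEnergy hM, hx, hv', neg_dotProduct,
    dotProduct_comm (δ *ᵥ _), hδ.dotProduct_mulVec_comm, dotProduct_comm, neg_add_cancel]

end DrivenOscillator

theorem discrete_energy_multidimensional_driven_general
    {N : ℕ} (Ω δ : Matrix (Fin N) (Fin N) ℝ)
    (hΩsym : Ωᵀ = Ω)
    (hδsym : δᵀ = δ) (hδinv : IsUnit δ.det)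
    (a x₀ v₀ x₁ v₁ : Fin N → ℝ)
    (h1 : δ⁻¹.mulVec (x₁ - x₀) = (1 / 2 : ℝ) • (v₁ + v₀))
    (h2 : δ⁻¹.mulVec (v₁ - v₀) = -((1 / 2 : ℝ) • (Ω ^ 2).mulVec (x₁ + x₀)) + a) :
    (1 / 2 : ℝ) * (v₁ ⬝ᵥ v₁) + (1 / 2 : ℝ) * (x₁ ⬝ᵥ (Ω ^ 2).mulVec x₁) - a ⬝ᵥ x₁
      = (1 / 2 : ℝ) * (v₀ ⬝ᵥ v₀) + (1 / 2 : ℝ) * (x₀ ⬝ᵥ (Ω ^ 2).mulVec x₀) - a ⬝ᵥ x₀ :=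
  oscillatorEnergy_eq_of_step (IsSymm.pow hΩsym 2) hδsym
    (eq_mulVec_of_inv_mulVec_eq hδinv h1) (eq_mulVec_of_inv_mulVec_eq hδinv h2)

/-- Energy conservation for the implicit (discrete-gradient) form of the exact
discretization of the multidimensional driven harmonic oscillator `x'' + Ω²x = a`:
if `Ω` and `δ` are symmetric invertible matrices with `δ` commuting with `Ω²`, and
`δ⁻¹(x₁ - x₀) = ½(v₁ + v₀)`, `δ⁻¹(v₁ - v₀) = -½Ω²(x₁ + x₀) + a`, then
`I = ½|v|² + ½⟨x, Ω²x⟩ - ⟨a, x⟩` is preserved. -/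
theorem discrete_energy_multidimensional_driven
    {N : ℕ} (Ω δ : Matrix (Fin N) (Fin N) ℝ)
    (hΩsym : Ωᵀ = Ω) (hΩinv : IsUnit Ω.det)
    (hδsym : δᵀ = δ) (hδinv : IsUnit δ.det)
    (hcomm : δ * Ω ^ 2 = Ω ^ 2 * δ)
    (a x₀ v₀ x₁ v₁ : Fin N → ℝ)
    (h1 : δ⁻¹.mulVec (x₁ - x₀) = (1 / 2 : ℝ) • (v₁ + v₀))
    (h2 : δ⁻¹.mulVec (v₁ - v₀) = -((1 / 2 : ℝ) • (Ω ^ 2).mulVec (x₁ + x₀)) + a) :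
    (1 / 2 : ℝ) * (v₁ ⬝ᵥ v₁) + (1 / 2 : ℝ) * (x₁ ⬝ᵥ (Ω ^ 2).mulVec x₁) - a ⬝ᵥ x₁
      = (1 / 2 : ℝ) * (v₀ ⬝ᵥ v₀) + (1 / 2 : ℝ) * (x₀ ⬝ᵥ (Ω ^ 2).mulVec x₀) - a ⬝ᵥ x₀ :=
  discrete_energy_multidimensional_driven_general Ω δ hΩsym hδsym hδinv a x₀ v₀ x₁ v₁ h1 h2
end
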